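/- Let U ⊆ ℝⁿ be open, g : U → (ℝⁿ →ₗ ℝⁿ →ₗ ℝ) a smooth map with each g(q) a symmetric nondegenerate bilinear form, with Christoffel symbols Γˡ_{ij}, and let T(q,v) = (1/2) g(q)(v,v) be the kinetic energy on U × ℝⁿ. Let α : U × ℝⁿ → (ℝⁿ)* be a horizontal 1-form and let D(q,v) = (v, f(q,v)) be the associated Newton field, i.e. fˡ(q,v) = −( Σ_k g^{lk}(q) α_k(q,v) + Σ_{i,j} Γˡ_{ij}(q) vⁱ vʲ ). Then for every (q,v) ∈ U × ℝⁿ, the derivative of T along D satisfies (D T)(q,v) := (fderiv T (q,v))(v, f(q,v)) = −α(q,v)(v). -/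

import Mathlib

/-- The `i`-th standard basis vector of `ℝⁿ`. -/
noncomputable def basisVec {n : ℕ} (i : Fin n) : Fin n → ℝ := Pi.single i 1

/-- The Christoffel symbols `Γˡ_{ij}(q) = (1/2) Σ_k g^{lk}(q) (∂_i g_{jk} + ∂_j g_{ik} − ∂_k g_{ij})(q)`
of a metric `g` with inverse coefficients `ginv`. -/
noncomputable def christoffel {n : ℕ}
    (g : (Fin n → ℝ) → ((Fin n → ℝ) →L[ℝ] (Fin n → ℝ) →L[ℝ] ℝ))
    (ginv : (Fin n → ℝ) → Fin n → Fin n → ℝ)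
    (l i j : Fin n) (q : Fin n → ℝ) : ℝ :=
  (1/2) * ∑ k, ginv q l k *
    (fderiv ℝ (fun p => g p (basisVec j) (basisVec k)) q (basisVec i)
      + fderiv ℝ (fun p => g p (basisVec i) (basisVec k)) q (basisVec j)
      - fderiv ℝ (fun p => g p (basisVec i) (basisVec j)) q (basisVec k))

/-- The kinetic energy `T(q,v) = (1/2) g(q)(v,v)` on `U × ℝⁿ`. -/
noncomputable def kineticEnergy {n : ℕ}
    (g : (Fin n → ℝ) → ((Fin n → ℝ) →L[ℝ] (Fin n → ℝ) →L[ℝ] ℝ)) :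
    (Fin n → ℝ) × (Fin n → ℝ) → ℝ :=
  fun p => (1/2) * g p.1 p.2 p.2

/-!
Along `D`, `T` changes by `½ (∂_v g)(v,v) + g(v, f)`. Writing `fˡ = Σ_k g^{lk} cₖ` with
`cₖ = −αₖ − Σ Γ_{k,ij} vⁱ vʲ` (Christoffel symbols of the first kind), the metric cancels against
its inverse, so `g(v, f) = −α(v) − Σ Γ_{k,ij} vᵏ vⁱ vʲ`. Relabelling indices, the cubic term is
`½ Σ ∂_i g_{jk} vⁱ vʲ vᵏ = ½ (∂_v g)(v,v)`, which cancels the first term.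
-/

variable {n : ℕ}

lemma apply_eq_sum_basisVec {M : Type*} [AddCommMonoid M] [Module ℝ M] [TopologicalSpace M]
    (L : (Fin n → ℝ) →L[ℝ] M) (v : Fin n → ℝ) :
    L v = ∑ i, v i • L (basisVec i) := by
  conv_lhs => rw [pi_eq_sum_univ' v]
  simp [basisVec, map_sum, map_smul]

lemma apply_apply_eq_sum_basisVec (B : (Fin n → ℝ) →L[ℝ] (Fin n → ℝ) →L[ℝ] ℝ)
    (u w : Fin n → ℝ) :
    B u w = ∑ i, ∑ j, u i * w j * B (basisVec i) (basisVec j) := by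
  rw [apply_eq_sum_basisVec B u]
  simp only [sum_apply, smul_apply, smul_eq_mul]
  refine Finset.sum_congr rfl fun i _ => ?_
  rw [apply_eq_sum_basisVec (B (basisVec i)) w, Finset.mul_sum]
  exact Finset.sum_congr rfl fun j _ => by rw [smul_eq_mul]; ring

lemma fderiv_apply_apply {E F G H : Type*} [NormedAddCommGroup E] [NormedSpace ℝ E]
    [NormedAddCommGroup F] [NormedSpace ℝ F] [NormedAddCommGroup G] [NormedSpace ℝ G]
    [NormedAddCommGroup H] [NormedSpace ℝ H] {b : E → F →L[ℝ] G →L[ℝ] H} {q : E}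
    (hb : DifferentiableAt ℝ b q) (u : F) (w : G) (x : E) :
    fderiv ℝ (fun p => b p u w) q x = fderiv ℝ b q x u w := by
  rw [fderiv_clm_apply (hb.clm_apply (differentiableAt_const u)) (differentiableAt_const w),
    fderiv_clm_apply hb (differentiableAt_const u)]
  simp

lemma fderiv_kineticEnergy_apply {g : (Fin n → ℝ) → ((Fin n → ℝ) →L[ℝ] (Fin n → ℝ) →L[ℝ] ℝ)}
    {q : Fin n → ℝ} (hg : DifferentiableAt ℝ g q) (v w a : Fin n → ℝ) :
    fderiv ℝ (kineticEnergy g) (q, v) (w, a)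
      = (1/2) * (fderiv ℝ g q w v v + g q a v + g q v a) := by
  have hgp : HasFDerivAt (fun p : (Fin n → ℝ) × (Fin n → ℝ) => g p.1)
      ((fderiv ℝ g q).comp (ContinuousLinearMap.fst ℝ _ _)) (q, v) :=
    hg.hasFDerivAt.comp (g := g) (f := Prod.fst) (q, v)
      (hasFDerivAt_fst (𝕜 := ℝ) (E := Fin n → ℝ) (F := Fin n → ℝ))
  have hT : HasFDerivAt (kineticEnergy g) _ (q, v) :=
    ((hgp.clm_apply hasFDerivAt_snd).clm_apply hasFDerivAt_snd).const_mul (1/2 : ℝ)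
  rw [hT.fderiv]
  simp only [ContinuousLinearMap.flip_add, add_apply, smul_add, smul_apply, smul_eq_mul,
    ContinuousLinearMap.comp_apply, ContinuousLinearMap.flip_apply,
    ContinuousLinearMap.coe_fst', ContinuousLinearMap.coe_snd']
  ring

/-- Christoffel symbols of the first kind, `Γ_{k,ij} = ½ (∂_i g_{jk} + ∂_j g_{ik} − ∂_k g_{ij})`. -/
noncomputable def christoffelFirst
    (g : (Fin n → ℝ) → ((Fin n → ℝ) →L[ℝ] (Fin n → ℝ) →L[ℝ] ℝ)) (k i j : Fin n)
    (q : Fin n → ℝ) : ℝ :=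
  (1/2) * (fderiv ℝ (fun p => g p (basisVec j) (basisVec k)) q (basisVec i)
    + fderiv ℝ (fun p => g p (basisVec i) (basisVec k)) q (basisVec j)
    - fderiv ℝ (fun p => g p (basisVec i) (basisVec j)) q (basisVec k))

lemma christoffel_eq_sum_mul_christoffelFirst
    (g : (Fin n → ℝ) → ((Fin n → ℝ) →L[ℝ] (Fin n → ℝ) →L[ℝ] ℝ))
    (ginv : (Fin n → ℝ) → Fin n → Fin n → ℝ) (l i j : Fin n) (q : Fin n → ℝ) :
    christoffel g ginv l i j q = ∑ k, ginv q l k * christoffelFirst g k i j q := by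
  simp only [christoffel, christoffelFirst, Finset.mul_sum]
  exact Finset.sum_congr rfl fun k _ => by ring

lemma sum_christoffel_mul_mul
    (g : (Fin n → ℝ) → ((Fin n → ℝ) →L[ℝ] (Fin n → ℝ) →L[ℝ] ℝ))
    (ginv : (Fin n → ℝ) → Fin n → Fin n → ℝ) (l : Fin n) (q v : Fin n → ℝ) :
    ∑ i, ∑ j, christoffel g ginv l i j q * v i * v j
      = ∑ k, ginv q l k * ∑ i, ∑ j, christoffelFirst g k i j q * v i * v j := by
  simp only [christoffel_eq_sum_mul_christoffelFirst, Finset.mul_sum, Finset.sum_mul]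
  symm
  rw [Finset.sum_comm]
  refine Finset.sum_congr rfl fun i _ => ?_
  rw [Finset.sum_comm]
  exact Finset.sum_congr rfl fun j _ => Finset.sum_congr rfl fun k _ => by ring

lemma sum_mul_christoffel_combination (v : Fin n → ℝ) (d : Fin n → Fin n → Fin n → ℝ) :
    ∑ k, v k * ∑ i, ∑ j, (1/2) * (d i j k + d j i k - d k i j) * v i * v j
      = (1/2) * ∑ i, ∑ j, ∑ k, v i * v j * v k * d i j k := by
  set S := ∑ i, ∑ j, ∑ k, v i * v j * v k * d i j k
  have h₁ : ∑ k, ∑ i, ∑ j, v k * v i * v j * d i j k = S := by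
    rw [Finset.sum_comm]
    exact Finset.sum_congr rfl fun i _ => by
      rw [Finset.sum_comm]
      exact Finset.sum_congr rfl fun j _ => Finset.sum_congr rfl fun k _ => by ring
  have h₂ : ∑ k, ∑ i, ∑ j, v k * v i * v j * d j i k = S := by
    rw [← h₁]
    exact Finset.sum_congr rfl fun k _ => by
      rw [Finset.sum_comm]
      exact Finset.sum_congr rfl fun j _ => Finset.sum_congr rfl fun i _ => by ring
  have h₃ : ∑ k, ∑ i, ∑ j, v k * v i * v j * d k i j = S :=
    Finset.sum_congr rfl fun k _ => Finset.sum_congr rfl fun i _ =>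
      Finset.sum_congr rfl fun j _ => by ring
  calc ∑ k, v k * ∑ i, ∑ j, (1/2) * (d i j k + d j i k - d k i j) * v i * v j
      = (1/2) * ((∑ k, ∑ i, ∑ j, v k * v i * v j * d i j k)
          + (∑ k, ∑ i, ∑ j, v k * v i * v j * d j i k)
          - ∑ k, ∑ i, ∑ j, v k * v i * v j * d k i j) := by
        simp only [Finset.mul_sum, ← Finset.sum_add_distrib, ← Finset.sum_sub_distrib]
        exact Finset.sum_congr rfl fun k _ => Finset.sum_congr rfl fun i _ =>
          Finset.sum_congr rfl fun j _ => by ring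
    _ = (1/2) * S := by rw [h₁, h₂, h₃]; ring

lemma fderiv_apply_self_eq_sum
    {g : (Fin n → ℝ) → ((Fin n → ℝ) →L[ℝ] (Fin n → ℝ) →L[ℝ] ℝ)} {q : Fin n → ℝ}
    (hg : DifferentiableAt ℝ g q) (v : Fin n → ℝ) :
    fderiv ℝ g q v v v = ∑ i, ∑ j, ∑ k, v i * v j * v k *
      fderiv ℝ (fun p => g p (basisVec j) (basisVec k)) q (basisVec i) := by
  simp only [fderiv_apply_apply hg]
  rw [apply_eq_sum_basisVec (fderiv ℝ g q) v]
  simp only [sum_apply, smul_apply, smul_eq_mul]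
  refine Finset.sum_congr rfl fun i _ => ?_
  rw [apply_apply_eq_sum_basisVec (fderiv ℝ g q (basisVec i)) v v, Finset.mul_sum]
  refine Finset.sum_congr rfl fun j _ => ?_
  rw [Finset.mul_sum]
  exact Finset.sum_congr rfl fun k _ => by ring

lemma sum_mul_sum_christoffelFirst_eq_half_fderiv
    {g : (Fin n → ℝ) → ((Fin n → ℝ) →L[ℝ] (Fin n → ℝ) →L[ℝ] ℝ)} {q : Fin n → ℝ}
    (hg : DifferentiableAt ℝ g q) (v : Fin n → ℝ) :
    ∑ k, v k * ∑ i, ∑ j, christoffelFirst g k i j q * v i * v j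
      = (1/2) * fderiv ℝ g q v v v := by
  rw [fderiv_apply_self_eq_sum hg]
  exact sum_mul_christoffel_combination v
    (fun i j k => fderiv ℝ (fun p => g p (basisVec j) (basisVec k)) q (basisVec i))

lemma apply_sum_mul_of_rightInverse {B : (Fin n → ℝ) →L[ℝ] (Fin n → ℝ) →L[ℝ] ℝ}
    {G : Fin n → Fin n → ℝ}
    (hG : ∀ i j, ∑ k, B (basisVec i) (basisVec k) * G k j = if i = j then 1 else 0)
    (v c : Fin n → ℝ) :
    B v (fun l => ∑ k, G l k * c k) = ∑ k, v k * c k := by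
  rw [apply_apply_eq_sum_basisVec]
  calc ∑ m, ∑ l, v m * (∑ k, G l k * c k) * B (basisVec m) (basisVec l)
      = ∑ m, v m * ∑ k, (∑ l, B (basisVec m) (basisVec l) * G l k) * c k := by
        simp only [Finset.mul_sum, Finset.sum_mul]
        exact Finset.sum_congr rfl fun m _ => by
          rw [Finset.sum_comm]
          exact Finset.sum_congr rfl fun k _ => Finset.sum_congr rfl fun l _ => by ring
    _ = ∑ m, v m * c m := by simp [hG]

theorem DT_eq_neg_alpha_dot_general {n : ℕ} (U : Set (Fin n → ℝ)) (hU : IsOpen U)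
    (g : (Fin n → ℝ) → ((Fin n → ℝ) →L[ℝ] (Fin n → ℝ) →L[ℝ] ℝ))
    (hg : ContDiffOn ℝ (⊤ : ℕ∞) g U)
    (hsymm : ∀ q ∈ U, ∀ u w : Fin n → ℝ, g q u w = g q w u)
    (ginv : (Fin n → ℝ) → Fin n → Fin n → ℝ)
    (hginv : ∀ q ∈ U, ∀ i j : Fin n,
      (∑ k, g q (basisVec i) (basisVec k) * ginv q k j) = if i = j then 1 else 0)
    (α : (Fin n → ℝ) × (Fin n → ℝ) → ((Fin n → ℝ) →L[ℝ] ℝ))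
    (f : (Fin n → ℝ) × (Fin n → ℝ) → (Fin n → ℝ))
    (hf : ∀ q ∈ U, ∀ (v : Fin n → ℝ) (l : Fin n),
      f (q, v) l = -((∑ k, ginv q l k * α (q, v) (basisVec k))
        + ∑ i, ∑ j, christoffel g ginv l i j q * v i * v j)) :
    ∀ q ∈ U, ∀ v : Fin n → ℝ,
      fderiv ℝ (kineticEnergy g) (q, v) (v, f (q, v)) = -(α (q, v) v) := by
  intro q hq v
  have hgq : DifferentiableAt ℝ g q :=
    (hg.differentiableOn (by simp)).differentiableAt (hU.mem_nhds hq)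
  have hacc : f (q, v) = fun l => ∑ k, ginv q l k *
      -(α (q, v) (basisVec k) + ∑ i, ∑ j, christoffelFirst g k i j q * v i * v j) := by
    funext l
    simp only [hf q hq v l, sum_christoffel_mul_mul, mul_neg, mul_add, Finset.sum_neg_distrib,
      Finset.sum_add_distrib]
  have hpairing : ∑ k, v k * -(α (q, v) (basisVec k)
      + ∑ i, ∑ j, christoffelFirst g k i j q * v i * v j)
      = -(α (q, v) v) - (1/2) * fderiv ℝ g q v v v := by
    rw [← sum_mul_sum_christoffelFirst_eq_half_fderiv hgq, apply_eq_sum_basisVec (α (q, v)) v]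
    simp only [mul_neg, mul_add, Finset.sum_neg_distrib, Finset.sum_add_distrib, smul_eq_mul]
    ring
  rw [fderiv_kineticEnergy_apply hgq, hsymm q hq (f (q, v)) v, hacc,
    apply_sum_mul_of_rightInverse (hginv q hq), hpairing]
  ring

/-- For the Newton field `D(q,v) = (v, f(q,v))` of the mechanical system
`(U, g, α)`, the derivative of the kinetic energy `T` along `D` satisfies
`D T = −α̇`, i.e. `(fderiv T (q,v))(v, f(q,v)) = −α(q,v)(v)` on `U × ℝⁿ`. -/
theorem DT_eq_neg_alpha_dot {n : ℕ} (U : Set (Fin n → ℝ)) (hU : IsOpen U)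
    (g : (Fin n → ℝ) → ((Fin n → ℝ) →L[ℝ] (Fin n → ℝ) →L[ℝ] ℝ))
    (hg : ContDiffOn ℝ (⊤ : ℕ∞) g U)
    (hsymm : ∀ q ∈ U, ∀ u w : Fin n → ℝ, g q u w = g q w u)
    (hnondeg : ∀ q ∈ U, ∀ u : Fin n → ℝ, (∀ w, g q u w = 0) → u = 0)
    (ginv : (Fin n → ℝ) → Fin n → Fin n → ℝ)
    (hginv : ∀ q ∈ U, ∀ i j : Fin n,
      (∑ k, g q (basisVec i) (basisVec k) * ginv q k j) = if i = j then 1 else 0)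
    (α : (Fin n → ℝ) × (Fin n → ℝ) → ((Fin n → ℝ) →L[ℝ] ℝ))
    (f : (Fin n → ℝ) × (Fin n → ℝ) → (Fin n → ℝ))
    (hf : ∀ q ∈ U, ∀ (v : Fin n → ℝ) (l : Fin n),
      f (q, v) l = -((∑ k, ginv q l k * α (q, v) (basisVec k))
        + ∑ i, ∑ j, christoffel g ginv l i j q * v i * v j)) :
    ∀ q ∈ U, ∀ v : Fin n → ℝ,
      fderiv ℝ (kineticEnergy g) (q, v) (v, f (q, v)) = -(α (q, v) v) :=
  DT_eq_neg_alpha_dot_general U hU g hg hsymm ginv hginv α f hf
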